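/- Let (x,v) be a solution of the perturbed Cucker-Smale system ẋ_i = v_i, v̇_i = (1/N) Σ_{j=1}^N a(‖x_i − x_j‖)(v_j − v_i) + α(t)(v̄(t) − v_i(t)) + β(t) Δ_i(t), where a is nonincreasing. Then with X(t) = B(x(t),x(t)), V(t) = B(v(t),v(t)) and v_i^⊥(t) = v_i(t) − v̄(t), for every t ≥ 0 one has d/dt V(t) ≤ −2 a(√(2N X(t))) V(t) − 2 α(t) V(t) + (2 β(t)/N) Σ_{i=1}^N Δ_i(t)·v_i^⊥(t). -/

import Mathlib

open scoped BigOperators InnerProductSpace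
open MeasureTheory Filter

/-- The symmetric bilinear form `B(v,w) = (1/(2N²)) ∑ᵢ∑ⱼ (vᵢ-vⱼ)·(wᵢ-wⱼ)`. -/
noncomputable def bform {d N : ℕ} (v w : Fin N → EuclideanSpace ℝ (Fin d)) : ℝ :=
  (2 * (N : ℝ) ^ 2)⁻¹ * ∑ i, ∑ j, ⟪v i - v j, w i - w j⟫_ℝ

/-- The mean of `N` vectors. -/
noncomputable def meanVec {d N : ℕ} (v : Fin N → EuclideanSpace ℝ (Fin d)) :
    EuclideanSpace ℝ (Fin d) :=
  (N : ℝ)⁻¹ • ∑ i, v i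

/-!
Writing `B(u, w) = N⁻¹ ∑ᵢ ⟪uᵢ - ū, wᵢ⟫`, one has `dV/dt = 2 B(v, v̇)`, which splits along the three
terms of the velocity field. The damping term contributes exactly `-2αV` and the perturbation
exactly the `Δ`-sum. Symmetrizing in `i ↔ j` turns the alignment term into
`-(1/N²) ∑ᵢⱼ a(‖xᵢ - xⱼ‖) ‖vᵢ - vⱼ‖²`; every pairwise distance is at most `√(2N X)`
(since `X = N⁻¹ ∑ᵢ ‖xᵢ - x̄‖²`) and `a` is nonincreasing, so each weight is at least `a(√(2N X))`.
-/

section InnerSums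

variable {ι E : Type*} [Fintype ι] [NormedAddCommGroup E] [InnerProductSpace ℝ E]

theorem sum_sum_inner_sub_sub (u w : ι → E) :
    ∑ i, ∑ j, ⟪u i - u j, w i - w j⟫_ℝ = 2 * ∑ i, ∑ j, ⟪u i - u j, w i⟫_ℝ := by
  have hswap : ∑ i, ∑ j, ⟪u i - u j, w j⟫_ℝ = -∑ i, ∑ j, ⟪u i - u j, w i⟫_ℝ := by
    rw [Finset.sum_comm]
    simp only [← Finset.sum_neg_distrib, ← inner_neg_left, neg_sub]
  simp only [inner_sub_right, Finset.sum_sub_distrib, hswap]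
  ring

-- Symmetrize in `i ↔ j`: the reference point `c` cancels.
theorem two_mul_sum_inner_sum_smul_sub {A : ι → ι → ℝ} (hA : ∀ i j, A i j = A j i)
    (u : ι → E) (c : E) :
    2 * ∑ i, ⟪u i - c, ∑ j, A i j • (u j - u i)⟫_ℝ = -∑ i, ∑ j, A i j * ‖u i - u j‖ ^ 2 := by
  have hS : ∑ i, ⟪u i - c, ∑ j, A i j • (u j - u i)⟫_ℝ
      = ∑ i, ∑ j, A i j * ⟪u i - c, u j - u i⟫_ℝ := by
    simp only [inner_sum, real_inner_smul_right]
  have hswap : ∑ i, ∑ j, A i j * ⟪u i - c, u j - u i⟫_ℝ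
      = ∑ i, ∑ j, A i j * ⟪u j - c, u i - u j⟫_ℝ := by
    rw [Finset.sum_comm]
    exact Finset.sum_congr rfl fun i _ => Finset.sum_congr rfl fun j _ => by rw [hA]
  have hpair : ∀ i j, ⟪u i - c, u j - u i⟫_ℝ + ⟪u j - c, u i - u j⟫_ℝ = -‖u i - u j‖ ^ 2 := by
    intro i j
    rw [← real_inner_self_eq_norm_sq]
    simp only [inner_sub_left, inner_sub_right, real_inner_comm (u i) (u j)]
    ring
  calc 2 * ∑ i, ⟪u i - c, ∑ j, A i j • (u j - u i)⟫_ℝ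
      = ∑ i, ∑ j, A i j * (⟪u i - c, u j - u i⟫_ℝ + ⟪u j - c, u i - u j⟫_ℝ) := by
        rw [hS]
        simp only [mul_add, Finset.sum_add_distrib, ← hswap]
        ring
    _ = -∑ i, ∑ j, A i j * ‖u i - u j‖ ^ 2 := by
        simp only [hpair, mul_neg, Finset.sum_neg_distrib]

end InnerSums

variable {d N : ℕ}

theorem sum_sub_meanVec (u : Fin N → EuclideanSpace ℝ (Fin d)) :
    ∑ i, (u i - meanVec u) = 0 := by
  rcases N with _ | n
  · simp
  · simp only [meanVec, Finset.sum_sub_distrib, Finset.sum_const, Finset.card_univ,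
      Fintype.card_fin, ← Nat.cast_smul_eq_nsmul ℝ, smul_smul]
    rw [mul_inv_cancel₀ (by positivity), one_smul, sub_self]

theorem sum_sub_eq_smul_sub_meanVec (u : Fin N → EuclideanSpace ℝ (Fin d)) (i : Fin N) :
    ∑ j, (u i - u j) = (N : ℝ) • (u i - meanVec u) := by
  have h : ∀ j, u i - u j = (u i - meanVec u) - (u j - meanVec u) := fun j => by abel
  rw [Finset.sum_congr rfl fun j _ => h j, Finset.sum_sub_distrib, sum_sub_meanVec, sub_zero,
    Finset.sum_const, Finset.card_univ, Fintype.card_fin, Nat.cast_smul_eq_nsmul]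

theorem bform_eq_sum_inner (u w : Fin N → EuclideanSpace ℝ (Fin d)) :
    bform u w = (N : ℝ)⁻¹ * ∑ i, ⟪u i - meanVec u, w i⟫_ℝ := by
  have hrow : ∀ i, ∑ j, ⟪u i - u j, w i⟫_ℝ = N * ⟪u i - meanVec u, w i⟫_ℝ := fun i => by
    rw [← sum_inner, sum_sub_eq_smul_sub_meanVec, real_inner_smul_left]
  rw [bform, sum_sum_inner_sub_sub, Finset.sum_congr rfl fun i _ => hrow i, ← Finset.mul_sum]
  rcases eq_or_ne (N : ℝ) 0 with hN | hN
  · simp [hN]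
  · field_simp

theorem bform_self_eq_sum_norm_sq (u : Fin N → EuclideanSpace ℝ (Fin d)) :
    bform u u = (N : ℝ)⁻¹ * ∑ i, ‖u i - meanVec u‖ ^ 2 := by
  have h : ∀ i, ⟪u i - meanVec u, u i⟫_ℝ
      = ‖u i - meanVec u‖ ^ 2 + ⟪u i - meanVec u, meanVec u⟫_ℝ := fun i => by
    rw [← real_inner_self_eq_norm_sq, ← inner_add_right, sub_add_cancel]
  simp only [bform_eq_sum_inner, h, Finset.sum_add_distrib, ← sum_inner, sum_sub_meanVec,
    inner_zero_left, add_zero]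

theorem bform_self_nonneg (u : Fin N → EuclideanSpace ℝ (Fin d)) : 0 ≤ bform u u := by
  rw [bform_self_eq_sum_norm_sq]
  positivity

theorem norm_sub_le_sqrt_bform (u : Fin N → EuclideanSpace ℝ (Fin d)) (i j : Fin N) :
    ‖u i - u j‖ ≤ Real.sqrt (2 * N * bform u u) := by
  have hB : 0 ≤ 2 * N * bform u u := by
    have := bform_self_nonneg u
    positivity
  rw [Real.le_sqrt (norm_nonneg _) hB]
  rcases eq_or_ne i j with rfl | hij
  · simpa using hB
  have hN : (N : ℝ) ≠ 0 := Nat.cast_ne_zero.mpr (Fin.pos i).ne'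
  calc ‖u i - u j‖ ^ 2 = ‖(u i - meanVec u) - (u j - meanVec u)‖ ^ 2 := by
        rw [sub_sub_sub_cancel_right]
    _ ≤ 2 * (‖u i - meanVec u‖ ^ 2 + ‖u j - meanVec u‖ ^ 2) := by
        nlinarith [parallelogram_law_with_norm ℝ (u i - meanVec u) (u j - meanVec u),
          sq_nonneg ‖(u i - meanVec u) + (u j - meanVec u)‖]
    _ = 2 * ∑ k ∈ {i, j}, ‖u k - meanVec u‖ ^ 2 := by rw [Finset.sum_pair hij]
    _ ≤ 2 * ∑ k, ‖u k - meanVec u‖ ^ 2 := by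
        gcongr
        exact Finset.subset_univ _
    _ = 2 * N * bform u u := by
        rw [bform_self_eq_sum_norm_sq]
        field_simp

theorem bform_alignment_le {A : Fin N → Fin N → ℝ} (hA : ∀ i j, A i j = A j i) {c : ℝ}
    (hc : ∀ i j, c ≤ A i j) (u : Fin N → EuclideanSpace ℝ (Fin d)) :
    bform u (fun i => (N : ℝ)⁻¹ • ∑ j, A i j • (u j - u i)) ≤ -c * bform u u := by
  have hself : bform u u = (2 * (N : ℝ) ^ 2)⁻¹ * ∑ i, ∑ j, ‖u i - u j‖ ^ 2 := by
    simp only [bform, real_inner_self_eq_norm_sq]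
  have hlow : c * ∑ i, ∑ j, ‖u i - u j‖ ^ 2 ≤ ∑ i, ∑ j, A i j * ‖u i - u j‖ ^ 2 := by
    simp only [Finset.mul_sum]
    gcongr with i _ j _
    exact hc i j
  have key := two_mul_sum_inner_sum_smul_sub hA u (meanVec u)
  rw [bform_eq_sum_inner, hself]
  simp only [real_inner_smul_right, ← Finset.mul_sum]
  have h2N : 0 ≤ (2 * (N : ℝ) ^ 2)⁻¹ := by positivity
  calc (N : ℝ)⁻¹ * ((N : ℝ)⁻¹ * ∑ i, ⟪u i - meanVec u, ∑ j, A i j • (u j - u i)⟫_ℝ)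
      = -(2 * (N : ℝ) ^ 2)⁻¹ * ∑ i, ∑ j, A i j * ‖u i - u j‖ ^ 2 := by
        linear_combination (2 * (N : ℝ) ^ 2)⁻¹ * key
    _ ≤ -c * ((2 * (N : ℝ) ^ 2)⁻¹ * ∑ i, ∑ j, ‖u i - u j‖ ^ 2) := by
        linarith [mul_le_mul_of_nonneg_left hlow h2N]

theorem bform_add_right (u w w' : Fin N → EuclideanSpace ℝ (Fin d)) :
    bform u (w + w') = bform u w + bform u w' := by
  simp only [bform, Pi.add_apply, add_sub_add_comm, inner_add_right, Finset.sum_add_distrib,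
    mul_add]

theorem bform_smul_right (u w : Fin N → EuclideanSpace ℝ (Fin d)) (c : ℝ) :
    bform u (c • w) = c * bform u w := by
  simp only [bform, Pi.smul_apply, ← smul_sub, real_inner_smul_right, ← Finset.mul_sum]
  ring

theorem bform_const_sub_right (u : Fin N → EuclideanSpace ℝ (Fin d))
    (c : EuclideanSpace ℝ (Fin d)) : bform u (fun i => c - u i) = -bform u u := by
  have h : ∀ i j, ⟪u i - u j, u j - u i⟫_ℝ = -⟪u i - u j, u i - u j⟫_ℝ := fun i j => by
    rw [← inner_neg_right, neg_sub]
  simp only [bform, sub_sub_sub_cancel_left, h, Finset.sum_neg_distrib, mul_neg]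

theorem bform_cuckerSmale_le {A : Fin N → Fin N → ℝ} (hA : ∀ i j, A i j = A j i) {c : ℝ}
    (hc : ∀ i j, c ≤ A i j) (u D : Fin N → EuclideanSpace ℝ (Fin d)) (α β : ℝ) :
    bform u (fun i => (N : ℝ)⁻¹ • ∑ j, A i j • (u j - u i) + α • (meanVec u - u i) + β • D i)
      ≤ -c * bform u u - α * bform u u + β / N * ∑ i, ⟪D i, u i - meanVec u⟫_ℝ := by
  have hsplit : (fun i => (N : ℝ)⁻¹ • ∑ j, A i j • (u j - u i) + α • (meanVec u - u i) + β • D i)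
      = (fun i => (N : ℝ)⁻¹ • ∑ j, A i j • (u j - u i)) + α • (fun i => meanVec u - u i)
        + β • D := rfl
  have hD : bform u D = (N : ℝ)⁻¹ * ∑ i, ⟪D i, u i - meanVec u⟫_ℝ := by
    simp only [bform_eq_sum_inner, real_inner_comm (D _)]
  rw [hsplit, bform_add_right, bform_add_right, bform_smul_right, bform_smul_right,
    bform_const_sub_right, hD, div_eq_mul_inv]
  linarith [bform_alignment_le hA hc u]

theorem hasDerivAt_bform_self {v : ℝ → Fin N → EuclideanSpace ℝ (Fin d)}
    {w : Fin N → EuclideanSpace ℝ (Fin d)} {t : ℝ}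
    (hv : ∀ i, HasDerivAt (fun s => v s i) (w i) t) :
    HasDerivAt (fun s => bform (v s) (v s)) (2 * bform (v t) w) t := by
  have hterm : ∀ i j, HasDerivAt (fun s => ⟪v s i - v s j, v s i - v s j⟫_ℝ)
      (2 * ⟪v t i - v t j, w i - w j⟫_ℝ) t := fun i j => by
    have hij := (hv i).fun_sub (hv j)
    exact (hij.inner ℝ hij).congr_deriv (by rw [real_inner_comm (w i - w j)]; ring)
  refine ((HasDerivAt.fun_sum fun i _ => HasDerivAt.fun_sum fun j _ => hterm i j).const_mul
    (2 * (N : ℝ) ^ 2)⁻¹).congr_deriv ?_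
  simp only [bform, ← Finset.mul_sum]
  ring

theorem perturbedCuckerSmale_V_decay_general
    {d N : ℕ}
    (a : ℝ → ℝ)
    (ha_mono : ∀ r s, 0 ≤ r → r ≤ s → a s ≤ a r)
    (α β : ℝ → ℝ)
    (Δ : Fin N → ℝ → EuclideanSpace ℝ (Fin d))
    (x v : ℝ → Fin N → EuclideanSpace ℝ (Fin d))
    (hv : ∀ (i : Fin N), ∀ t, 0 ≤ t → HasDerivAt (fun s => v s i)
      ((N : ℝ)⁻¹ • ∑ j, a ‖x t i - x t j‖ • (v t j - v t i)
        + α t • (meanVec (v t) - v t i) + β t • Δ i t) t) :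
    ∀ t, 0 ≤ t → ∃ V' : ℝ, HasDerivAt (fun s => bform (v s) (v s)) V' t ∧
      V' ≤ -2 * a (Real.sqrt (2 * N * bform (x t) (x t))) * bform (v t) (v t)
        - 2 * α t * bform (v t) (v t)
        + (2 * β t / N) * ∑ i, ⟪Δ i t, v t i - meanVec (v t)⟫_ℝ := by
  intro t ht
  refine ⟨_, hasDerivAt_bform_self fun i => hv i t ht, ?_⟩
  have hdist : ∀ i j, a (Real.sqrt (2 * N * bform (x t) (x t))) ≤ a ‖x t i - x t j‖ :=
    fun i j => ha_mono _ _ (norm_nonneg _) (norm_sub_le_sqrt_bform (x t) i j)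
  have hV := bform_cuckerSmale_le (A := fun i j => a ‖x t i - x t j‖)
    (fun i j => by rw [norm_sub_rev]) hdist (v t) (fun i => Δ i t) (α t) (β t)
  rw [mul_div_assoc]
  linarith

/-- Along any solution of the perturbed Cucker-Smale system,
`dV/dt ≤ -2 a(√(2N X)) V - 2 α V + (2β/N) ∑ᵢ Δᵢ·vᵢ^⊥`. -/
theorem perturbedCuckerSmale_V_decay
    {d N : ℕ} (hN : 0 < N)
    (a : ℝ → ℝ)
    (ha_pos : ∀ r, 0 ≤ r → 0 < a r)
    (ha_mono : ∀ r s, 0 ≤ r → r ≤ s → a s ≤ a r)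
    (ha_bdd : ∃ C, ∀ r, 0 ≤ r → a r ≤ C)
    (ha_lip : ∃ K : NNReal, LipschitzWith K a)
    (α β : ℝ → ℝ)
    (hα : ∀ t, 0 ≤ t → 0 ≤ α t) (hβ : ∀ t, 0 ≤ t → 0 ≤ β t)
    (Δ : Fin N → ℝ → EuclideanSpace ℝ (Fin d))
    (x v : ℝ → Fin N → EuclideanSpace ℝ (Fin d))
    (hx : ∀ (i : Fin N), ∀ t, 0 ≤ t → HasDerivAt (fun s => x s i) (v t i) t)
    (hv : ∀ (i : Fin N), ∀ t, 0 ≤ t → HasDerivAt (fun s => v s i)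
      ((N : ℝ)⁻¹ • ∑ j, a ‖x t i - x t j‖ • (v t j - v t i)
        + α t • (meanVec (v t) - v t i) + β t • Δ i t) t) :
    ∀ t, 0 ≤ t → ∃ V' : ℝ, HasDerivAt (fun s => bform (v s) (v s)) V' t ∧
      V' ≤ -2 * a (Real.sqrt (2 * N * bform (x t) (x t))) * bform (v t) (v t)
        - 2 * α t * bform (v t) (v t)
        + (2 * β t / N) * ∑ i, ⟪Δ i t, v t i - meanVec (v t)⟫_ℝ :=
  perturbedCuckerSmale_V_decay_general a ha_mono α β Δ x v hv
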